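/- arXiv:2511.10843 — 3 statements merged into one kernel-verified Lean document; each statement's English description precedes it below -/
import Mathlib

section
/- Let X be a finite set, p a probability mass function on X, and f : X → ℝ with ∑_x p(x)|f(x)| > 0. Define q*(x) = p(x)|f(x)| / (∑_{x'} p(x')|f(x')|). Then q* is a probability mass function, q* belongs to Λ (i.e., q*(x) = 0 implies p(x)f(x) = 0), and for every q ∈ Λ, the variance of the importance-sampled estimator under q* is at most the variance under q: Var_{q*}[(p/q*)·f] ≤ Var_q[(p/q)·f]. -/
open Finset

theorem optimal_sampling_distribution {X : Type*} [Fintype X]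
    (p f : X → ℝ)
    (hp0 : ∀ x, 0 ≤ p x) (hp1 : ∑ x, p x = 1)
    (hpos : 0 < ∑ x, p x * |f x|) :
    -- q*(x) = p(x)|f(x)| / ∑ p|f|
    (∀ x, 0 ≤ p x * |f x| / (∑ x', p x' * |f x'|)) ∧
    (∑ x, p x * |f x| / (∑ x', p x' * |f x'|)) = 1 ∧
    (∀ x, p x * |f x| / (∑ x', p x' * |f x'|) = 0 → p x * f x = 0) ∧
    (∀ q : X → ℝ, (∀ x, 0 ≤ q x) → ∑ x, q x = 1 →
      (∀ x, q x = 0 → p x * f x = 0) →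
      (∑ x, (if 0 < p x * |f x| / (∑ x', p x' * |f x'|) then
          (p x * |f x| / (∑ x', p x' * |f x'|)) *
            (p x * f x / (p x * |f x| / (∑ x', p x' * |f x'|)))^2 else 0))
        - (∑ x, p x * f x)^2
      ≤ (∑ x, (if 0 < q x then q x * (p x * f x / q x)^2 else 0))
        - (∑ x, p x * f x)^2) := by
  set S := ∑ x, p x * |f x| with hS
  have habs : ∀ x, p x * |f x| = |p x * f x| := fun x => by
    rw [abs_mul, abs_of_nonneg (hp0 x)]
  refine ⟨fun x => div_nonneg (mul_nonneg (hp0 x) (abs_nonneg _)) hpos.le, ?_, ?_, ?_⟩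
  · rw [← Finset.sum_div, div_self hpos.ne']
  · intro x hx
    rcases div_eq_zero_iff.mp hx with h | h
    · exact abs_eq_zero.mp (by rw [← habs]; exact h)
    · exact absurd h hpos.ne'
  · intro q hq0 hq1 hqΛ
    apply sub_le_sub_right
    -- LHS equals S^2
    have hLHS : (∑ x, (if 0 < p x * |f x| / S then
        (p x * |f x| / S) * (p x * f x / (p x * |f x| / S))^2 else 0)) = S^2 := by
      have hterm : ∀ x, (if 0 < p x * |f x| / S then
          (p x * |f x| / S) * (p x * f x / (p x * |f x| / S))^2 else 0)
          = (p x * |f x|) * S := by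
        intro x
        by_cases h : 0 < p x * |f x| / S
        · rw [if_pos h]
          have ha : 0 < p x * |f x| := by
            have := mul_pos h hpos
            rwa [div_mul_cancel₀ _ hpos.ne'] at this
          have h2 : (p x * f x)^2 = (p x * |f x|)^2 := by rw [habs, sq_abs]
          rw [div_pow, h2]
          have ha0 := ha.ne'
          have hS0 := hpos.ne'
          field_simp
        · rw [if_neg h]
          have ha : p x * |f x| = 0 := by
            rcases (mul_nonneg (hp0 x) (abs_nonneg (f x))).eq_or_lt' with h' | h'
            · exact h'
            · exact absurd (div_pos h' hpos) h
          rw [ha, zero_mul]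
      rw [Finset.sum_congr rfl (fun x _ => hterm x), ← Finset.sum_mul, ← hS, sq]
    rw [hLHS]
    -- RHS ≥ S^2 via Cauchy-Schwarz (Sedrakyan)
    set s := Finset.univ.filter (fun x => 0 < q x) with hsdef
    have hqpos : ∀ x ∈ s, 0 < q x := fun x hx => (Finset.mem_filter.mp hx).2
    have hSsum : ∑ x ∈ s, |p x * f x| = S := by
      rw [hS]
      simp_rw [habs]
      apply Finset.sum_subset (Finset.subset_univ s)
      intro x _ hx
      have hqx : q x = 0 := by
        by_contra h
        exact hx (Finset.mem_filter.mpr ⟨Finset.mem_univ x,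
          lt_of_le_of_ne (hq0 x) (Ne.symm h)⟩)
      rw [hqΛ x hqx, abs_zero]
    have hRHS : (∑ x, (if 0 < q x then q x * (p x * f x / q x)^2 else 0))
        = ∑ x ∈ s, |p x * f x| ^ 2 / q x := by
      rw [Finset.sum_filter]
      apply Finset.sum_congr rfl
      intro x _
      by_cases h : 0 < q x
      · rw [if_pos h, if_pos h, sq_abs]
        field_simp
      · rw [if_neg h, if_neg h]
    rw [hRHS]
    have hCS := Finset.sq_sum_div_le_sum_sq_div s (fun x => |p x * f x|) hqpos
    rw [hSsum] at hCS
    have hqs1 : ∑ x ∈ s, q x ≤ 1 := by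
      rw [← hq1]
      apply Finset.sum_le_sum_of_subset_of_nonneg (Finset.subset_univ s)
      intro x _ _; exact hq0 x
    have hqspos : 0 < ∑ x ∈ s, q x := by
      rcases (Finset.sum_nonneg fun x hx => (hqpos x hx).le).eq_or_lt' with h | h
      · exfalso
        have : S = 0 := by
          rw [← hSsum]
          have := (Finset.sum_eq_zero_iff_of_nonneg fun x hx => (hqpos x hx).le).mp h
          exact Finset.sum_eq_zero fun x hx => absurd (this x hx) (hqpos x hx).ne'
        exact hpos.ne' this
      · exact h
    calc S^2 ≤ S^2 / ∑ x ∈ s, q x := by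
          rw [le_div_iff₀ hqspos]
          nlinarith [sq_nonneg S]
      _ ≤ _ := hCS
end

section
/- Let X be a finite set, p a pmf on X, and f : X → ℝ of constant sign (∀ x, f(x) ≥ 0, or ∀ x, f(x) ≤ 0). Then the set Λ = {q pmf : ∀ x, q(x) = 0 → p(x)f(x) = 0} equals the set Λ₊ of all pmfs q for which the importance-sampled estimator is unbiased, i.e., Λ₊ = {q pmf : ∑_{x : q(x)>0} q(x)·(p(x)/q(x))·f(x) = ∑_x p(x)f(x)}. -/
open Finset

theorem lambda_eq_lambda_plus {X : Type*} [Fintype X]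
    (p f : X → ℝ)
    (hp0 : ∀ x, 0 ≤ p x) (hp1 : ∑ x, p x = 1)
    (hsign : (∀ x, 0 ≤ f x) ∨ (∀ x, f x ≤ 0)) :
    {q : X → ℝ | ((∀ x, 0 ≤ q x) ∧ ∑ x, q x = 1) ∧
        (∀ x, q x = 0 → p x * f x = 0)}
    = {q : X → ℝ | ((∀ x, 0 ≤ q x) ∧ ∑ x, q x = 1) ∧
        (∑ x, (if 0 < q x then q x * (p x / q x) * f x else 0)) = ∑ x, p x * f x} := by
  ext q
  simp only [Set.mem_setOf_eq]
  constructor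
  · rintro ⟨⟨hq0, hq1⟩, hz⟩
    refine ⟨⟨hq0, hq1⟩, ?_⟩
    apply Finset.sum_congr rfl
    intro x _
    split_ifs with h
    · field_simp
    · have : q x = 0 := le_antisymm (not_lt.mp h) (hq0 x)
      exact (hz x this).symm
  · rintro ⟨⟨hq0, hq1⟩, hsum⟩
    refine ⟨⟨hq0, hq1⟩, ?_⟩
    have key : ∑ x, (if 0 < q x then q x * (p x / q x) * f x else 0)
        = ∑ x, (if 0 < q x then p x * f x else 0) := by
      apply Finset.sum_congr rfl
      intro x _
      split_ifs with h
      · field_simp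
      · rfl
    rw [key] at hsum
    have hdiff : ∑ x, (if 0 < q x then 0 else p x * f x) = 0 := by
      have h1 := Finset.sum_add_distrib (s := Finset.univ)
        (f := fun x => if 0 < q x then p x * f x else 0)
        (g := fun x => if 0 < q x then 0 else p x * f x)
      have h2 : ∑ x, ((if 0 < q x then p x * f x else 0) +
          (if 0 < q x then 0 else p x * f x)) = ∑ x, p x * f x := by
        apply Finset.sum_congr rfl
        intro x _
        split_ifs <;> ring
      linarith [h1, h2, hsum]
    intro x hx
    have hnx : ¬ 0 < q x := by rw [hx]; exact lt_irrefl 0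
    rcases hsign with hs | hs
    · have hall : ∀ y ∈ Finset.univ, (0:ℝ) ≤ (if 0 < q y then 0 else p y * f y) := by
        intro y _
        split_ifs
        · exact le_refl 0
        · exact mul_nonneg (hp0 y) (hs y)
      have := (Finset.sum_eq_zero_iff_of_nonneg hall).mp hdiff x (Finset.mem_univ x)
      simpa [hnx] using this
    · have hall : ∀ y ∈ Finset.univ, (if 0 < q y then 0 else p y * f y) ≤ (0:ℝ) := by
        intro y _
        split_ifs
        · exact le_refl 0
        · exact mul_nonpos_of_nonneg_of_nonpos (hp0 y) (hs y)
      have := (Finset.sum_eq_zero_iff_of_nonpos hall).mp hdiff x (Finset.mem_univ x)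
      simpa [hnx] using this
end

section
/- (Optimality of proportional behaviour policy, single-state version) Let A be a finite set, π a pmf on A, and q̂ : A → ℝ with q̂(a) > 0 for all a in the support of π. Among all pmfs μ on A with μ(a) = 0 → π(a)·√(q̂(a)) = 0, the choice μ̂(a) = π(a)√(q̂(a)) / ∑_{a'} π(a')√(q̂(a')) minimizes ∑_{a: μ(a)>0} π(a)² q̂(a) / μ(a), and the minimum value is (∑_a π(a)√(q̂(a)))². -/
open Finset

theorem optimal_proportional_behaviour_policy {A : Type*} [Fintype A]
    (pol qhat : A → ℝ)
    (hp0 : ∀ a, 0 ≤ pol a) (hp1 : ∑ a, pol a = 1)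
    (hsupp : ∃ a, 0 < pol a)
    (hq0 : ∀ a, 0 ≤ qhat a) (hqpos : ∀ a, 0 < pol a → 0 < qhat a) :
    -- every feasible pmf μ has objective value at least Z²
    (∀ mu : A → ℝ, (∀ a, 0 ≤ mu a) → ∑ a, mu a = 1 →
      (∀ a, mu a = 0 → pol a * Real.sqrt (qhat a) = 0) →
      (∑ a, pol a * Real.sqrt (qhat a))^2 ≤
        ∑ a, (if 0 < mu a then (pol a)^2 * qhat a / mu a else 0)) ∧
    -- the proportional policy μ̂ attains the value Z²
    (∑ a, (if 0 < pol a * Real.sqrt (qhat a) / (∑ a', pol a' * Real.sqrt (qhat a')) then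
        (pol a)^2 * qhat a /
          (pol a * Real.sqrt (qhat a) / (∑ a', pol a' * Real.sqrt (qhat a'))) else 0))
      = (∑ a, pol a * Real.sqrt (qhat a))^2 := by
  have hf0 : ∀ a, 0 ≤ pol a * Real.sqrt (qhat a) :=
    fun a => mul_nonneg (hp0 a) (Real.sqrt_nonneg _)
  have hZpos : 0 < ∑ a, pol a * Real.sqrt (qhat a) := by
    obtain ⟨a, ha⟩ := hsupp
    exact Finset.sum_pos' (fun i _ => hf0 i)
      ⟨a, Finset.mem_univ a, mul_pos ha (Real.sqrt_pos.mpr (hqpos a ha))⟩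
  constructor
  · intro mu hmu0 hmu1 hfeas
    have key := Finset.sum_mul_sq_le_sq_mul_sq Finset.univ
      (fun a => Real.sqrt (mu a))
      (fun a => if 0 < mu a then pol a * Real.sqrt (qhat a) / Real.sqrt (mu a) else 0)
    have h1 : (∑ a, Real.sqrt (mu a) *
        (if 0 < mu a then pol a * Real.sqrt (qhat a) / Real.sqrt (mu a) else 0))
        = ∑ a, pol a * Real.sqrt (qhat a) := by
      apply Finset.sum_congr rfl
      intro a _
      by_cases h : 0 < mu a
      · rw [if_pos h]
        have hs : Real.sqrt (mu a) ≠ 0 := (Real.sqrt_pos.mpr h).ne'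
        field_simp
      · rw [if_neg h]
        have h0 : mu a = 0 := le_antisymm (not_lt.mp h) (hmu0 a)
        rw [hfeas a h0, mul_zero]
    have h2 : (∑ a, Real.sqrt (mu a) ^ 2) = 1 := by
      rw [← hmu1]
      exact Finset.sum_congr rfl fun a _ => Real.sq_sqrt (hmu0 a)
    have h3 : (∑ a, (if 0 < mu a then pol a * Real.sqrt (qhat a) / Real.sqrt (mu a) else 0) ^ 2)
        = ∑ a, (if 0 < mu a then (pol a)^2 * qhat a / mu a else 0) := by
      apply Finset.sum_congr rfl
      intro a _
      by_cases h : 0 < mu a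
      · rw [if_pos h, if_pos h, div_pow, mul_pow, Real.sq_sqrt (hq0 a), Real.sq_sqrt (hmu0 a)]
      · simp [h]
    simp only [h1, h2, h3, one_mul] at key
    exact key
  · have hZne : (∑ a', pol a' * Real.sqrt (qhat a')) ≠ 0 := hZpos.ne'
    have : (∑ a, (if 0 < pol a * Real.sqrt (qhat a) / (∑ a', pol a' * Real.sqrt (qhat a')) then
        (pol a)^2 * qhat a /
          (pol a * Real.sqrt (qhat a) / (∑ a', pol a' * Real.sqrt (qhat a'))) else 0))
        = ∑ a, (pol a * Real.sqrt (qhat a)) * (∑ a', pol a' * Real.sqrt (qhat a')) := by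
      apply Finset.sum_congr rfl
      intro a _
      by_cases h : 0 < pol a * Real.sqrt (qhat a)
      · rw [if_pos (div_pos h hZpos)]
        have hpol : 0 < pol a := by
          rcases (hp0 a).lt_or_eq with h' | h'
          · exact h'
          · exfalso; rw [← h', zero_mul] at h; exact lt_irrefl 0 h
        have hs : 0 < Real.sqrt (qhat a) := Real.sqrt_pos.mpr (hqpos a hpol)
        have hq : qhat a = Real.sqrt (qhat a) * Real.sqrt (qhat a) :=
          (Real.mul_self_sqrt (hq0 a)).symm
        rw [hq]
        field_simp
        rw [Real.sqrt_sq hs.le]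
      · have h0 : pol a * Real.sqrt (qhat a) = 0 :=
          le_antisymm (not_lt.mp h) (hf0 a)
        rw [h0, zero_mul, zero_div, if_neg (lt_irrefl 0)]
    rw [this, ← Finset.sum_mul, sq]
end
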